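/- Let (X, f_{1,∞}) be a periodic non-autonomous system on a Hausdorff space X with period p and induced map g. Then (X, f_{1,∞}) is thickly Hausdorff sensitive if and only if (X, g) is thickly Hausdorff sensitive. -/
import Mathlib


open Topology Filter Set
open scoped Uniformity

/-- `traj f n = f_n ∘ ⋯ ∘ f_1` (and `traj f 0 = id`), i.e. `f_1^n`. -/
def traj {X : Type*} (f : ℕ → X → X) : ℕ → X → X
  | 0 => id
  | n + 1 => f (n + 1) ∘ traj f n

/-- The family `f` is periodic with period `p`. -/
def PeriodicFam {X : Type*} (f : ℕ → X → X) (p : ℕ) : Prop :=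
  ∀ n, f (n + p) = f n

/-- A set of naturals is thick: it contains arbitrarily long blocks of consecutive integers. -/
def Thick (T : Set ℕ) : Prop :=
  ∀ k : ℕ, ∃ n : ℕ, ∀ i ≤ k, n + i ∈ T

/-- A set of naturals is syndetic: it has bounded gaps. -/
def Syndetic (S : Set ℕ) : Prop :=
  ∃ M : ℕ, ∀ n : ℕ, ∃ m ∈ S, n ≤ m ∧ m ≤ n + M

/-- `x` is a transitive point of the non-autonomous system `(X, f_{1,∞})`. -/
def TransPt {X : Type*} [TopologicalSpace X] (f : ℕ → X → X) (x : X) : Prop :=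
  Dense (Set.range fun n => traj f n x)

/-- `x` is a transitive point of the autonomous system `(X, g)`. -/
def TransPtAut {X : Type*} [TopologicalSpace X] (g : X → X) (x : X) : Prop :=
  Dense (Set.range fun n => g^[n] x)

/-- `x` is an equicontinuity point of `(X, f_{1,∞})` on a uniform space. -/
def EqPt {X : Type*} [UniformSpace X] (f : ℕ → X → X) (x : X) : Prop :=
  ∀ E ∈ 𝓤 X, ∃ D ∈ 𝓤 X, ∀ y : X, (x, y) ∈ D → ∀ n : ℕ, (traj f n x, traj f n y) ∈ E

/-- `x` is a syndetically equicontinuous point of `(X, f_{1,∞})`. -/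
def SynEqPt {X : Type*} [UniformSpace X] (f : ℕ → X → X) (x : X) : Prop :=
  ∀ E ∈ 𝓤 X, ∃ U ∈ 𝓝 x,
    Syndetic {n : ℕ | ∀ x₁ ∈ U, ∀ x₂ ∈ U, (traj f n x₁, traj f n x₂) ∈ E}

/-- `x` is a syndetically equicontinuous point of the autonomous system `(X, g)`. -/
def SynEqPtAut {X : Type*} [UniformSpace X] (g : X → X) (x : X) : Prop :=
  ∀ E ∈ 𝓤 X, ∃ U ∈ 𝓝 x,
    Syndetic {n : ℕ | ∀ x₁ ∈ U, ∀ x₂ ∈ U, (g^[n] x₁, g^[n] x₂) ∈ E}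

/-- `N(U, D)` for the non-autonomous system. -/
def NSet {X : Type*} (f : ℕ → X → X) (U : Set X) (D : Set (X × X)) : Set ℕ :=
  {n : ℕ | 0 < n ∧ ∃ x ∈ U, ∃ y ∈ U, (traj f n x, traj f n y) ∉ D}

/-- `N(U, D)` for the autonomous system. -/
def NSetAut {X : Type*} (g : X → X) (U : Set X) (D : Set (X × X)) : Set ℕ :=
  {n : ℕ | 0 < n ∧ ∃ x ∈ U, ∃ y ∈ U, (g^[n] x, g^[n] y) ∉ D}

/-- Sensitivity of `(X, f_{1,∞})`. -/
def Sensitive {X : Type*} [UniformSpace X] (f : ℕ → X → X) : Prop :=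
  ∃ D ∈ 𝓤 X, ∀ U : Set X, IsOpen U → U.Nonempty → (NSet f U D).Nonempty

/-- Thick sensitivity of `(X, f_{1,∞})`. -/
def ThickSensitive {X : Type*} [UniformSpace X] (f : ℕ → X → X) : Prop :=
  ∃ D ∈ 𝓤 X, ∀ U : Set X, IsOpen U → U.Nonempty → Thick (NSet f U D)

/-- Thick sensitivity of the autonomous system `(X, g)`. -/
def ThickSensitiveAut {X : Type*} [UniformSpace X] (g : X → X) : Prop :=
  ∃ D ∈ 𝓤 X, ∀ U : Set X, IsOpen U → U.Nonempty → Thick (NSetAut g U D)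

/-- Multi-sensitivity of `(X, f_{1,∞})`. -/
def MultiSensitive {X : Type*} [UniformSpace X] (f : ℕ → X → X) : Prop :=
  ∃ D ∈ 𝓤 X, ∀ (k : ℕ) (U : Fin (k + 1) → Set X),
    (∀ i, IsOpen (U i)) → (∀ i, (U i).Nonempty) → (⋂ i, NSet f (U i) D).Nonempty

/-- Multi-sensitivity of the autonomous system `(X, g)`. -/
def MultiSensitiveAut {X : Type*} [UniformSpace X] (g : X → X) : Prop :=
  ∃ D ∈ 𝓤 X, ∀ (k : ℕ) (U : Fin (k + 1) → Set X),
    (∀ i, IsOpen (U i)) → (∀ i, (U i).Nonempty) → (⋂ i, NSetAut g (U i) D).Nonempty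

/-- Eventual sensitivity of `(X, f_{1,∞})` with a given entourage `D`. -/
def EvSensitiveWith {X : Type*} [UniformSpace X] (f : ℕ → X → X) (D : Set (X × X)) : Prop :=
  ∀ x : X, ∀ E ∈ 𝓤 X, ∃ n k : ℕ, 0 < n ∧ 0 < k ∧
    ∃ y : X, (traj f n x, y) ∈ E ∧ (traj f (n + k) x, traj f k y) ∉ D

/-- Eventual sensitivity of `(X, f_{1,∞})`. -/
def EvSensitive {X : Type*} [UniformSpace X] (f : ℕ → X → X) : Prop :=
  ∃ D ∈ 𝓤 X, EvSensitiveWith f D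

/-- Eventual sensitivity of the autonomous system `(X, g)` with entourage `D`. -/
def EvSensitiveAutWith {X : Type*} [UniformSpace X] (g : X → X) (D : Set (X × X)) : Prop :=
  ∀ x : X, ∀ E ∈ 𝓤 X, ∃ q k : ℕ, 0 < q ∧ 0 < k ∧
    ∃ y : X, (g^[q] x, y) ∈ E ∧ (g^[q + k] x, g^[k] y) ∉ D

/-- `(x, y)` is a (topological) equicontinuity pair for `(X, f_{1,∞})`. -/
def EqPair {X : Type*} [TopologicalSpace X] (f : ℕ → X → X) (x y : X) : Prop :=
  ∀ O ∈ 𝓝 y, ∃ U ∈ 𝓝 x, ∃ V ∈ 𝓝 y, ∀ n : ℕ, 0 < n →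
    ((traj f n '' U) ∩ V).Nonempty → traj f n '' U ⊆ O

/-- `(x, y)` is a syndetic equicontinuity pair for `(X, f_{1,∞})`. -/
def SynEqPair {X : Type*} [TopologicalSpace X] (f : ℕ → X → X) (x y : X) : Prop :=
  ∀ O ∈ 𝓝 y, ∃ U ∈ 𝓝 x, ∃ V ∈ 𝓝 y,
    Syndetic {n : ℕ | ((traj f n '' U) ∩ V).Nonempty → traj f n '' U ⊆ O}

/-- `O` is a splitting neighborhood of `y` with respect to `x`. -/
def SplittingNbhd {X : Type*} [TopologicalSpace X] (f : ℕ → X → X) (x y : X) (O : Set X) :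
    Prop :=
  O ∈ 𝓝 y ∧ ∀ U ∈ 𝓝 x, ∀ V ∈ 𝓝 y, ∃ n : ℕ, 0 < n ∧
    ((traj f n '' U) ∩ V).Nonempty ∧ ¬ traj f n '' U ⊆ O

/-- A finite open cover of `X`. -/
def IsFinOpenCover {X : Type*} [TopologicalSpace X] (𝒰 : Finset (Set X)) : Prop :=
  (∀ U ∈ 𝒰, IsOpen U) ∧ ⋃₀ (↑𝒰 : Set (Set X)) = Set.univ

/-- `N(V, 𝒰)`: times at which `f_1^n(V)` is not contained in any single member of `𝒰`. -/
def HNSet {X : Type*} (f : ℕ → X → X) (V : Set X) (𝒰 : Finset (Set X)) : Set ℕ :=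
  {n : ℕ | 0 < n ∧ ∀ U ∈ 𝒰, ¬ traj f n '' V ⊆ U}

/-- `N(V, 𝒰)` for the autonomous system. -/
def HNSetAut {X : Type*} (g : X → X) (V : Set X) (𝒰 : Finset (Set X)) : Set ℕ :=
  {n : ℕ | 0 < n ∧ ∀ U ∈ 𝒰, ¬ g^[n] '' V ⊆ U}

/-- Hausdorff sensitivity of `(X, f_{1,∞})`. -/
def HSensitive {X : Type*} [TopologicalSpace X] (f : ℕ → X → X) : Prop :=
  ∃ 𝒰 : Finset (Set X), IsFinOpenCover 𝒰 ∧
    ∀ V : Set X, IsOpen V → V.Nonempty → (HNSet f V 𝒰).Nonempty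

/-- Hausdorff sensitivity of the autonomous system `(X, g)`. -/
def HSensitiveAut {X : Type*} [TopologicalSpace X] (g : X → X) : Prop :=
  ∃ 𝒰 : Finset (Set X), IsFinOpenCover 𝒰 ∧
    ∀ V : Set X, IsOpen V → V.Nonempty → (HNSetAut g V 𝒰).Nonempty

/-- Thick Hausdorff sensitivity of `(X, f_{1,∞})`. -/
def ThickHSensitive {X : Type*} [TopologicalSpace X] (f : ℕ → X → X) : Prop :=
  ∃ 𝒰 : Finset (Set X), IsFinOpenCover 𝒰 ∧
    ∀ V : Set X, IsOpen V → V.Nonempty → Thick (HNSet f V 𝒰)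

/-- Thick Hausdorff sensitivity of the autonomous system `(X, g)`. -/
def ThickHSensitiveAut {X : Type*} [TopologicalSpace X] (g : X → X) : Prop :=
  ∃ 𝒰 : Finset (Set X), IsFinOpenCover 𝒰 ∧
    ∀ V : Set X, IsOpen V → V.Nonempty → Thick (HNSetAut g V 𝒰)

/-- Multi-Hausdorff sensitivity of the autonomous system `(X, g)`. -/
def MultiHSensitiveAut {X : Type*} [TopologicalSpace X] (g : X → X) : Prop :=
  ∃ 𝒰 : Finset (Set X), IsFinOpenCover 𝒰 ∧
    ∀ (m : ℕ) (V : Fin (m + 1) → Set X),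
      (∀ i, IsOpen (V i)) → (∀ i, (V i).Nonempty) → (⋂ i, HNSetAut g (V i) 𝒰).Nonempty

section Aux

variable {X : Type*}

/-- Composition `f_{r+n} ∘ ⋯ ∘ f_{r+1}`. -/
def trFrom (f : ℕ → X → X) (r : ℕ) : ℕ → X → X
  | 0 => id
  | n + 1 => f (r + n + 1) ∘ trFrom f r n

lemma traj_add_eq (f : ℕ → X → X) (r : ℕ) :
    ∀ s : ℕ, traj f (r + s) = trFrom f r s ∘ traj f r := by
  intro s
  induction s with
  | zero => rfl
  | succ s ih =>
    show traj f (r + s + 1) = _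
    rw [traj, ih]
    rfl

lemma trFrom_continuous (f : ℕ → X → X) [TopologicalSpace X] (hf : ∀ n, Continuous (f n))
    (r : ℕ) : ∀ s, Continuous (trFrom f r s) := by
  intro s
  induction s with
  | zero => exact continuous_id
  | succ s ih => exact (hf _).comp ih

lemma traj_continuous (f : ℕ → X → X) [TopologicalSpace X] (hf : ∀ n, Continuous (f n)) :
    ∀ n, Continuous (traj f n) := by
  intro n
  induction n with
  | zero => exact continuous_id
  | succ n ih => exact (hf _).comp ih

lemma traj_add_period (f : ℕ → X → X) (p : ℕ) (hper : PeriodicFam f p) :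
    ∀ n, traj f (n + p) = traj f n ∘ traj f p := by
  intro n
  induction n with
  | zero => simp [traj]
  | succ n ih =>
    have : n + 1 + p = (n + p) + 1 := by omega
    have h2 : f (n + p + 1) = f (n + 1) := by
      rw [show n + p + 1 = (n + 1) + p by omega]; exact hper (n + 1)
    rw [this, traj, ih, h2]
    rfl

lemma traj_mul_add (f : ℕ → X → X) (p : ℕ) (hper : PeriodicFam f p) (r : ℕ) :
    ∀ m : ℕ, traj f (m * p + r) = traj f r ∘ (traj f p)^[m] := by
  intro m
  induction m with
  | zero => simp
  | succ m ih =>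
    have h1 : (m + 1) * p + r = (m * p + r) + p := by ring
    rw [h1, traj_add_period f p hper, ih, Function.iterate_succ]
    rfl

lemma traj_mul (f : ℕ → X → X) (p : ℕ) (hper : PeriodicFam f p) (m : ℕ) :
    traj f (m * p) = (traj f p)^[m] := by
  have := traj_mul_add f p hper 0 m
  simpa [traj] using this

end Aux

theorem thickHSensitive_iff_thickHSensitive_induced {X : Type*} [TopologicalSpace X]
    [T2Space X]
    (f : ℕ → X → X) (hf : ∀ n, Continuous (f n))
    (p : ℕ) (hp : 0 < p) (hper : PeriodicFam f p) :
    ThickHSensitive f ↔ ThickHSensitiveAut (traj f p) := by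
  set g := traj f p with hg
  constructor
  · rintro ⟨𝒰, hcov, hthick⟩
    refine ⟨𝒰, hcov, ?_⟩
    intro V hV hVne k
    obtain ⟨m, hm⟩ := hthick V hV hVne ((k + 1) * p)
    have hm0 : 0 < m := by simpa using (hm 0 (by omega)).1
    have hmod : m % p + p * (m / p) = m := Nat.mod_add_div m p
    have hlt : m % p < p := Nat.mod_lt m hp
    have e1 : (m / p + 1) * p = p * (m / p) + p := by ring
    have hnm : m ≤ (m / p + 1) * p := by omega
    have hnm2 : (m / p + 1) * p ≤ m + p := by omega
    obtain ⟨d, hd⟩ : ∃ d, (m / p + 1) * p = m + d := ⟨(m / p + 1) * p - m, by omega⟩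
    refine ⟨m / p + 1, fun i hi => ?_⟩
    set j := d + i * p with hj
    have e2 : (m / p + 1 + i) * p = (m / p + 1) * p + i * p := by ring
    have hij : m + j = (m / p + 1 + i) * p := by omega
    have hjle : j ≤ (k + 1) * p := by
      have h1 : i * p ≤ k * p := Nat.mul_le_mul_right p hi
      have h2 : (k + 1) * p = k * p + p := by ring
      omega
    have hmem := hm j hjle
    refine ⟨by generalize m / p = q; omega, fun U hU => ?_⟩
    have h3 : g^[m / p + 1 + i] = traj f (m + j) := by
      rw [hij, hg, traj_mul f p hper]
    rw [h3]
    exact hmem.2 U hU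
  · rintro ⟨𝒰₀, ⟨hop, hcovers⟩, hthick⟩
    -- the "tail" maps h r = f_p ∘ ⋯ ∘ f_{r+1}
    set h : ℕ → X → X := fun r => trFrom f r (p - r) with hh
    have hcomp : ∀ r < p, h r ∘ traj f r = g := by
      intro r hr
      have := traj_add_eq f r (p - r)
      rw [show r + (p - r) = p by omega] at this
      rw [hg, this, hh]
    classical
    -- refined cover
    set 𝒰 : Finset (Set X) :=
      Finset.image (fun σ : Fin p → {U // U ∈ 𝒰₀} =>
        ⋂ r : Fin p, h r ⁻¹' ((σ r : Set X))) Finset.univ with h𝒰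
    have hcont : ∀ r, Continuous (h r) := fun r => trFrom_continuous f hf r _
    refine ⟨𝒰, ⟨?_, ?_⟩, ?_⟩
    · -- open
      intro U hU
      rw [h𝒰, Finset.mem_image] at hU
      obtain ⟨σ, -, rfl⟩ := hU
      exact isOpen_iInter_of_finite fun r => (hop _ (σ r).2).preimage (hcont r)
    · -- covers
      apply Set.eq_univ_of_forall
      intro x
      have hx : ∀ r : Fin p, ∃ U : {U // U ∈ 𝒰₀}, h r x ∈ (U : Set X) := by
        intro r
        have : h r x ∈ ⋃₀ (↑𝒰₀ : Set (Set X)) := by rw [hcovers]; trivial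
        obtain ⟨U, hU, hxU⟩ := this
        exact ⟨⟨U, hU⟩, hxU⟩
      choose σ hσ using hx
      refine ⟨⋂ r : Fin p, h r ⁻¹' ((σ r : Set X)), ?_, ?_⟩
      · rw [h𝒰]
        exact Finset.mem_image.2 ⟨σ, Finset.mem_univ _, rfl⟩
      · exact Set.mem_iInter.2 fun r => hσ r
    · -- thickness
      intro V hV hVne k
      obtain ⟨a, ha⟩ := hthick V hV hVne (k + 1)
      have ha0 : 0 < a := by simpa using (ha 0 (by omega)).1
      obtain ⟨b, rfl⟩ : ∃ b, a = b + 1 := ⟨a - 1, by omega⟩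
      refine ⟨b * p + 1, fun i hi => ?_⟩
      set n := b * p + 1 + i with hndef
      refine ⟨by omega, fun U hU => ?_⟩
      rw [h𝒰, Finset.mem_image] at hU
      obtain ⟨σ, -, rfl⟩ := hU
      intro hsub
      have hrp : n % p < p := Nat.mod_lt n hp
      have hdm : p * (n / p) + n % p = n := Nat.div_add_mod n p
      have hnmr : n = (n / p) * p + n % p := by rw [mul_comm]; omega
      -- bounds on n / p
      have hmlb : b ≤ n / p := (Nat.le_div_iff_mul_le hp).2 (by omega)
      have hmub : n / p ≤ b + k + 1 := by
        have h2 : k + 2 ≤ (k + 2) * p := Nat.le_mul_of_pos_right _ hp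
        have h3 : (b + k + 2) * p = b * p + (k + 2) * p := by ring
        have h1 : n < (b + k + 2) * p := by omega
        have := (Nat.div_lt_iff_lt_mul hp).2 h1
        omega
      -- f_1^n = traj f (n % p) ∘ g^[n / p]
      have hsplit : traj f n = traj f (n % p) ∘ g^[n / p] := by
        have := traj_mul_add f p hper (n % p) (n / p)
        rw [← hnmr] at this
        exact this
      -- h (n % p) ∘ traj f n = g^[n / p + 1]
      have hkey : ∀ x : X, h (n % p) (traj f n x) = g^[n / p + 1] x := by
        intro x
        have hc := congrFun (hcomp (n % p) hrp) (g^[n / p] x)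
        simp only [Function.comp_apply] at hc
        rw [hsplit]
        simp only [Function.comp_apply, hc]
        rw [Function.iterate_succ']
        rfl
      -- derive contradiction with thickness of autonomous system
      have hj : n / p - b ≤ k + 1 := by omega
      have hcontra := (ha (n / p - b) hj).2 (↑(σ ⟨n % p, hrp⟩)) (σ ⟨n % p, hrp⟩).2
      apply hcontra
      rintro y ⟨x, hxV, rfl⟩
      have h1 : traj f n x ∈ ⋂ r' : Fin p, h r' ⁻¹' ((σ r' : Set X)) :=
        hsub ⟨x, hxV, rfl⟩
      have h2 : h (n % p) (traj f n x) ∈ (σ ⟨n % p, hrp⟩ : Set X) :=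
        Set.mem_iInter.1 h1 ⟨n % p, hrp⟩
      rw [hkey x] at h2
      have h3 : b + 1 + (n / p - b) = n / p + 1 := by omega
      rw [h3]
      exact h2
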